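/- arXiv:2202.04027 — 5 statements merged into one kernel-verified Lean document; each statement's English description precedes it below -/
import Mathlib

section
/- Let $G_1$ and $G_2$ be locally compact Hausdorff topological groups, let $\Lambda \leq G_1 \times G_2$ be a discrete subgroup, and let $K \leq G_2$ be a compact subgroup. Then the image of the subgroup $\Lambda \cap (G_1 \times K)$ under the projection homomorphism $G_1 \times G_2 \to G_1$ is a discrete subgroup of $G_1$. -/
/-- Let `G₁`, `G₂` be locally compact Hausdorff topological groups,
`Λ ≤ G₁ × G₂` a discrete subgroup and `K ≤ G₂` a compact subgroup. Then the projection of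
`Λ ∩ (G₁ × K)` to `G₁` is a discrete subgroup of `G₁`. -/
theorem stmt2 {G₁ G₂ : Type*}
    [Group G₁] [TopologicalSpace G₁] [IsTopologicalGroup G₁]
    [LocallyCompactSpace G₁] [T2Space G₁]
    [Group G₂] [TopologicalSpace G₂] [IsTopologicalGroup G₂]
    [LocallyCompactSpace G₂] [T2Space G₂]
    (Λ : Subgroup (G₁ × G₂)) (hΛdisc : DiscreteTopology Λ)
    (K : Subgroup G₂) (hKc : IsCompact (K : Set G₂)) :
    DiscreteTopology ((Λ ⊓ (⊤ : Subgroup G₁).prod K).map (MonoidHom.fst G₁ G₂)) := by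
  set S := (Λ ⊓ (⊤ : Subgroup G₁).prod K).map (MonoidHom.fst G₁ G₂) with hS
  apply discreteTopology_of_isOpen_singleton_one
  -- get a compact neighborhood of 1 in G₁
  obtain ⟨W, hWc, hWnhds⟩ := exists_compact_mem_nhds (1 : G₁)
  -- Λ is closed
  have hΛclosed : IsClosed (Λ : Set (G₁ × G₂)) := Subgroup.isClosed_of_discrete
  -- F := Λ ∩ (W ×ˢ K) is compact and discrete, hence finite
  have hFc : IsCompact ((Λ : Set (G₁ × G₂)) ∩ W ×ˢ (K : Set G₂)) :=
    (hWc.prod hKc).inter_left hΛclosed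
  have hFdisc : DiscreteTopology ((Λ : Set (G₁ × G₂)) ∩ W ×ˢ (K : Set G₂) : Set (G₁ × G₂)) :=
    DiscreteTopology.of_subset hΛdisc Set.inter_subset_left
  have hFfin : ((Λ : Set (G₁ × G₂)) ∩ W ×ˢ (K : Set G₂)).Finite := hFc.finite (isDiscrete_iff_discreteTopology.mpr hFdisc)
  -- T : finite set of nontrivial first coordinates
  set T : Set G₁ := (Prod.fst '' ((Λ : Set (G₁ × G₂)) ∩ W ×ˢ (K : Set G₂))) \ {1} with hT
  have hTfin : T.Finite := (hFfin.image _).diff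
  have hTclosed : IsClosed T := hTfin.isClosed
  -- U is an open neighborhood of 1
  set U : Set G₁ := interior W ∩ Tᶜ with hU
  have hUopen : IsOpen U := isOpen_interior.inter hTclosed.isOpen_compl
  have h1U : (1 : G₁) ∈ U := ⟨mem_interior_iff_mem_nhds.mpr hWnhds, by simp [hT]⟩
  rw [isOpen_induced_iff]
  refine ⟨U, hUopen, ?_⟩
  ext ⟨x, hx⟩
  simp only [Set.mem_preimage, Set.mem_singleton_iff]
  constructor
  · rintro hxU
    obtain ⟨⟨a, b⟩, ⟨hab : (a, b) ∈ Λ, -, hbK⟩, rfl⟩ := hx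
    have hmem : (a, b) ∈ (Λ : Set (G₁ × G₂)) ∩ W ×ˢ (K : Set G₂) :=
      ⟨hab, interior_subset hxU.1, hbK⟩
    have : a ∉ T := hxU.2
    have ha : a = 1 := by
      by_contra h
      exact this ⟨⟨(a, b), hmem, rfl⟩, h⟩
    exact Subtype.ext ha
  · intro h
    have : x = 1 := congrArg Subtype.val h
    subst this
    exact h1U
end

section
/- Let $Z$ be an abelian group, $q \geq 1$ an integer, and $K \leq Z$ a subgroup such that every element of $K$ has order dividing $q$ (equivalently, $x^q = 1$ for all $x \in K$). Suppose the quotient group $Z/K$ is finitely generated. Then: (i) the torsion subgroup $T$ of $Z$ has bounded exponent, i.e. there exists an integer $m \geq 1$ with $x^m = 1$ for all $x \in T$; (ii) $Z/T$ is a free abelian group of finite rank; and (iii) $Z$ is isomorphic to $\mathbb{Z}^r \times T$ for some integer $r \geq 0$. -/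
/-!
Since `K` is torsion, `K ≤ T`. The torsion of the finitely generated group `Z ⧸ K` is finite,
so it has an exponent `n`, and then every `x ∈ T` has `x ^ n ∈ K`, whence `x ^ (n * q) = 1`.
The quotient `Z ⧸ T` is a quotient of `Z ⧸ K`, hence finitely generated and torsion-free, hence
free of finite rank; being projective, it lifts to a section of `Z → Z ⧸ T`, which splits `Z`.
-/

open CommGroup (torsion)

theorem QuotientGroup.fg_of_le {G : Type*} [Group G] {N M : Subgroup G} [N.Normal] [M.Normal]
    (h : N ≤ M) [Group.FG (G ⧸ N)] : Group.FG (G ⧸ M) :=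
  Group.fg_of_surjective (QuotientGroup.map_surjective_of_surjective N M (MonoidHom.id G)
    QuotientGroup.mk_surjective h)

theorem MonoidHom.exists_rightInverse_of_projective {G Q : Type*} [CommGroup G] [CommGroup Q]
    [Module.Projective ℤ (Additive Q)] (π : G →* Q) (hπ : Function.Surjective π) :
    ∃ s : Q →* G, Function.RightInverse s π := by
  obtain ⟨s, hs⟩ := Module.projective_lifting_property (toAdditive π).toIntLinearMap
    LinearMap.id hπ
  exact ⟨toAdditive.symm s.toAddMonoidHom,
    fun y => congrArg Additive.toMul (LinearMap.congr_fun hs y)⟩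

def MonoidHom.mulEquivProdKerOfRightInverse {G Q : Type*} [CommGroup G] [Group Q] (π : G →* Q)
    (s : Q →* G) (hs : Function.RightInverse s π) : G ≃* Q × π.ker where
  toFun x := (π x, ⟨x * (s (π x))⁻¹, by simp [hs (π x)]⟩)
  invFun p := s p.1 * p.2
  left_inv x := by simp
  right_inv := fun ⟨y, t, ht⟩ => by
    rw [mem_ker] at ht
    ext <;> simp [hs y, ht]
  map_mul' x y := by
    ext
    · simp
    · simp [mul_mul_mul_comm, mul_comm (s (π y))⁻¹]

namespace CommGroup

variable {G : Type*} [CommGroup G]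

theorem isMulTorsion_torsion : IsMulTorsion (torsion G) := fun x =>
  (torsion G).subtype_injective.isOfFinOrder_iff.mp x.2

-- Subgroups of a finitely generated abelian group are finitely generated, as `ℤ` is Noetherian.
theorem fg_torsion [Group.FG G] : Group.FG (torsion G) := by
  rw [Group.fg_iff_subgroup_fg, Subgroup.fg_iff_add_fg]
  exact (Submodule.fg_iff_addSubgroup_fg
    (AddSubgroup.toIntSubmodule (torsion G).toAddSubgroup)).mp
      (IsNoetherian.noetherian (M := Additive G) _)

theorem exponentExists_torsion [Group.FG G] : Monoid.ExponentExists (torsion G) :=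
  have := fg_torsion (G := G)
  have := finite_of_fg_isMulTorsion _ (isMulTorsion_torsion (G := G))
  .of_finite

theorem exponentExists_torsion_of_quotient {K : Subgroup G} (hK : Monoid.ExponentExists K)
    (hGK : Monoid.ExponentExists (torsion (G ⧸ K))) : Monoid.ExponentExists (torsion G) := by
  obtain ⟨q, hq, hKq⟩ := hK
  obtain ⟨n, hn, hGKn⟩ := hGK
  refine ⟨n * q, mul_pos hn hq, fun x => Subtype.ext ?_⟩
  have hxn : x.1 ^ n ∈ K := by
    rw [← QuotientGroup.eq_one_iff, QuotientGroup.mk_pow]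
    exact congrArg Subtype.val (hGKn ⟨_, (QuotientGroup.mk' K).isOfFinOrder x.2⟩)
  simpa [pow_mul] using congrArg Subtype.val (hKq ⟨_, hxn⟩)

theorem exists_mulEquiv_multiplicative_fin_int [Group.FG G] [IsMulTorsionFree G] :
    ∃ r : ℕ, Nonempty (G ≃* Multiplicative (Fin r → ℤ)) :=
  -- `Additive G` is a finite torsion-free `ℤ`-module, hence free (an instance).
  ⟨_, ⟨(Module.finBasis ℤ (Additive G)).equivFun.toAddEquiv.toMultiplicativeRight⟩⟩

theorem exists_mulEquiv_prod_torsion [Group.FG (G ⧸ torsion G)] :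
    ∃ r : ℕ, Nonempty (G ≃* Multiplicative (Fin r → ℤ) × torsion G) := by
  obtain ⟨r, ⟨e⟩⟩ := exists_mulEquiv_multiplicative_fin_int (G := G ⧸ torsion G)
  obtain ⟨s, hs⟩ := (QuotientGroup.mk' (torsion G)).exists_rightInverse_of_projective
    (QuotientGroup.mk'_surjective _)
  exact ⟨r, ⟨(MonoidHom.mulEquivProdKerOfRightInverse _ s hs).trans
    (e.prodCongr (MulEquiv.subgroupCongr (QuotientGroup.ker_mk' _)))⟩⟩

end CommGroup

/-- Let `Z` be an abelian group, `q ≥ 1`, and `K ≤ Z` a subgroup with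
`x ^ q = 1` for all `x ∈ K`, such that `Z/K` is finitely generated. Then the torsion subgroup
`T` of `Z` has bounded exponent, `Z/T` is free abelian of finite rank, and
`Z ≅ ℤ^r × T` for some `r ≥ 0`. -/
theorem stmt5 {Z : Type*} [CommGroup Z] (q : ℕ) (hq : 1 ≤ q)
    (K : Subgroup Z) (hK : ∀ x ∈ K, x ^ q = 1)
    (hfg : Group.FG (Z ⧸ K)) :
    (∃ m : ℕ, 1 ≤ m ∧ ∀ x ∈ CommGroup.torsion Z, x ^ m = 1) ∧
    (∃ r : ℕ, Nonempty ((Z ⧸ CommGroup.torsion Z) ≃* Multiplicative (Fin r → ℤ))) ∧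
    (∃ r : ℕ, Nonempty (Z ≃* Multiplicative (Fin r → ℤ) × (CommGroup.torsion Z))) := by
  have hKT : K ≤ torsion Z := fun x hx => isOfFinOrder_iff_pow_eq_one.mpr ⟨q, hq, hK x hx⟩
  have hK_exp : Monoid.ExponentExists K := ⟨q, hq, fun x => Subtype.ext (hK x x.2)⟩
  obtain ⟨m, hm, hTm⟩ :=
    CommGroup.exponentExists_torsion_of_quotient hK_exp CommGroup.exponentExists_torsion
  have : Group.FG (Z ⧸ torsion Z) := QuotientGroup.fg_of_le hKT
  exact ⟨⟨m, hm, fun x hx => congrArg Subtype.val (hTm ⟨x, hx⟩)⟩,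
    CommGroup.exists_mulEquiv_multiplicative_fin_int, CommGroup.exists_mulEquiv_prod_torsion⟩
end

section
/- Let $L$ be a Hausdorff topological group, $N$ a normal subgroup of $L$, and $S \subseteq L$ a finite subset such that the subgroup generated by $S$ is dense in $L$. Let $K \leq N$ be a compact subgroup that is normal in $N$. Suppose that for each $s \in S$ there exist a compact subgroup $C_s \leq N$ that is normal in $N$ and satisfies $s C_s s^{-1} = C_s$, and an element $n_s \in N$ such that for all $n \in N$, $(s n s^{-1})(n_s n n_s^{-1})^{-1} \in C_s$ (i.e. conjugation by $s$ descends to an inner automorphism of $N/C_s$). Then there exists a compact subgroup $C$ with $K \leq C \leq N$ such that $g C g^{-1} = C$ for all $g \in L$ (i.e. $C$ is normal in $L$). -/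
/-- Let `L` be a Hausdorff topological group, `N ⊴ L`, and `S ⊆ L` a finite
set generating a dense subgroup. Let `K ≤ N` be a compact subgroup normal in `N`. Suppose for
each `s ∈ S` there are a compact subgroup `Cₛ ≤ N`, normal in `N`, with `s Cₛ s⁻¹ = Cₛ`, and an
element `nₛ ∈ N` such that conjugation by `s` agrees with conjugation by `nₛ` on `N` modulo
`Cₛ`. Then there is a compact subgroup `C` with `K ≤ C ≤ N` that is normal in `L`. -/
theorem stmt8 {L : Type*} [Group L] [TopologicalSpace L] [IsTopologicalGroup L] [T2Space L]
    (N : Subgroup L) (hN : N.Normal) (S : Finset L)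
    (hS : Dense ((Subgroup.closure (S : Set L)) : Set L))
    (K : Subgroup L) (hKN : K ≤ N) (hKc : IsCompact (K : Set L))
    (hKnorm : ∀ n ∈ N, ∀ k ∈ K, n * k * n⁻¹ ∈ K)
    (hinner : ∀ s ∈ S, ∃ C : Subgroup L, C ≤ N ∧ IsCompact (C : Set L) ∧
      (∀ n ∈ N, ∀ c ∈ C, n * c * n⁻¹ ∈ C) ∧
      C.map (MulAut.conj s).toMonoidHom = C ∧
      ∃ nₛ ∈ N, ∀ n ∈ N, (s * n * s⁻¹) * (nₛ * n * nₛ⁻¹)⁻¹ ∈ C) :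
    ∃ C : Subgroup L, K ≤ C ∧ C ≤ N ∧ IsCompact (C : Set L) ∧
      ∀ g : L, C.map (MulAut.conj g).toMonoidHom = C := by
  classical
  choose! C hCN hCc hCnorm hCconj ν hνN hν using hinner
  set e := N.subtype with he
  -- comap to subgroups of ↥N
  set f : L → Subgroup ↥N := fun s => (C s).comap e with hf
  set K' : Subgroup ↥N := K.comap e with hK'
  have hK'n : K'.Normal := ⟨fun k hk n => by
    simp only [hK', Subgroup.mem_comap] at hk ⊢
    exact hKnorm ↑n n.2 ↑k hk⟩
  -- compactness transfers along `comap e`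
  have hcomp : ∀ (H : Subgroup L), H ≤ N → IsCompact (H : Set L) →
      IsCompact ((H.comap e : Subgroup ↥N) : Set ↥N) := by
    intro H hHN hHc
    rw [Topology.IsEmbedding.subtypeVal.isCompact_iff]
    have himg : Subtype.val '' ((H.comap e : Subgroup ↥N) : Set ↥N) = (H : Set L) := by
      ext x
      simp only [Set.mem_image, SetLike.mem_coe, Subgroup.mem_comap]
      exact ⟨fun ⟨y, hy, hyx⟩ => hyx ▸ hy, fun hx => ⟨⟨x, hHN hx⟩, hx, rfl⟩⟩
    rw [himg]; exact hHc
  -- main induction: the joins are normal in `N` and compact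
  have main : ∀ T : Finset L, T ⊆ S →
      (K' ⊔ T.sup f).Normal ∧ IsCompact ((K' ⊔ T.sup f : Subgroup ↥N) : Set ↥N) := by
    intro T
    induction T using Finset.induction_on with
    | empty =>
      intro _
      rw [Finset.sup_empty, sup_bot_eq]
      exact ⟨hK'n, hcomp K hKN hKc⟩
    | @insert s T hsT ih =>
      intro hsub
      have hsS : s ∈ S := hsub (Finset.mem_insert_self s T)
      have hTS : T ⊆ S := fun x hx => hsub (Finset.mem_insert_of_mem hx)
      obtain ⟨ihn, ihc⟩ := ih hTS
      haveI hfs : (f s).Normal := ⟨fun c hc n => by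
        simp only [hf, Subgroup.mem_comap] at hc ⊢
        exact hCnorm s hsS ↑n n.2 ↑c hc⟩
      have heq : K' ⊔ (insert s T).sup f = (K' ⊔ T.sup f) ⊔ f s := by
        rw [Finset.sup_insert, sup_comm (f s) (T.sup f), ← sup_assoc]
      rw [heq]
      haveI := ihn
      refine ⟨Subgroup.sup_normal _ _, ?_⟩
      rw [Subgroup.mul_normal]
      exact ihc.mul (hcomp (C s) (hCN s hsS) (hCc s hsS))
  obtain ⟨hD'n, hD'c⟩ := main S le_rfl
  set D' : Subgroup ↥N := K' ⊔ S.sup f with hD'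
  set D : Subgroup L := D'.map e with hD
  -- basic properties of D
  have hDN : D ≤ N := by
    rintro x ⟨y, _, rfl⟩
    exact y.2
  have hKD : K ≤ D := by
    intro k hk
    exact ⟨⟨k, hKN hk⟩, Subgroup.mem_sup_left hk, rfl⟩
  have hDc : IsCompact (D : Set L) := by
    rw [hD, Subgroup.coe_map]
    exact hD'c.image continuous_subtype_val
  have hDnormN : ∀ n ∈ N, ∀ d ∈ D, n * d * n⁻¹ ∈ D := by
    intro n hn d hd
    obtain ⟨y, hy, rfl⟩ := hd
    exact ⟨⟨n, hn⟩ * y * ⟨n, hn⟩⁻¹, hD'n.conj_mem y hy ⟨n, hn⟩, rfl⟩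
  have hCtD : ∀ t ∈ S, C t ≤ D := by
    intro t ht c hc
    refine ⟨⟨c, hCN t ht hc⟩, Subgroup.mem_sup_right ?_, rfl⟩
    exact (Finset.le_sup ht : f t ≤ S.sup f) hc
  -- D = K ⊔ S.sup C in L
  have hD_eq : D = K ⊔ S.sup C := by
    have hmapK : K'.map e = K := by
      rw [hK', Subgroup.map_comap_eq, Subgroup.range_subtype]
      exact inf_eq_right.2 hKN
    have hmapsup : (S.sup f).map e = S.sup C := by
      rw [Finset.comp_sup_eq_sup_comp (Subgroup.map e)
        (fun x y => Subgroup.map_sup x y e) (Subgroup.map_bot e)]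
      refine Finset.sup_congr rfl fun t ht => ?_
      show ((C t).comap e).map e = C t
      rw [Subgroup.map_comap_eq, Subgroup.range_subtype]
      exact inf_eq_right.2 (hCN t ht)
    rw [hD, hD', Subgroup.map_sup, hmapK, hmapsup]
  -- each s ∈ S conjugates D into D, in both directions
  have key1 : ∀ s ∈ S, ∀ x ∈ D, s * x * s⁻¹ ∈ D := by
    intro s hs
    suffices h : D ≤ Subgroup.comap (MulAut.conj s).toMonoidHom D by
      intro x hx
      simpa using h hx
    conv_lhs => rw [hD_eq]
    apply sup_le
    · intro k hk
      simp only [Subgroup.mem_comap, MulEquiv.coe_toMonoidHom, MulAut.conj_apply]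
      have h1 : (s * k * s⁻¹) * (ν s * k * (ν s)⁻¹)⁻¹ ∈ D :=
        hCtD s hs (hν s hs k (hKN hk))
      have h2 : ν s * k * (ν s)⁻¹ ∈ D := hKD (hKnorm (ν s) (hνN s hs) k hk)
      have h3 := mul_mem h1 h2
      rwa [inv_mul_cancel_right] at h3
    · apply Finset.sup_le
      intro t ht c hc
      simp only [Subgroup.mem_comap, MulEquiv.coe_toMonoidHom, MulAut.conj_apply]
      have h1 : (s * c * s⁻¹) * (ν s * c * (ν s)⁻¹)⁻¹ ∈ D :=
        hCtD s hs (hν s hs c (hCN t ht hc))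
      have h2 : ν s * c * (ν s)⁻¹ ∈ D := hCtD t ht (hCnorm t ht (ν s) (hνN s hs) c hc)
      have h3 := mul_mem h1 h2
      rwa [inv_mul_cancel_right] at h3
  have key2 : ∀ s ∈ S, ∀ x ∈ D, s⁻¹ * x * s ∈ D := by
    intro s hs x hx
    have hxN : x ∈ N := hDN hx
    have hnN : s⁻¹ * x * s ∈ N := by
      have := hN.conj_mem x hxN s⁻¹
      simpa using this
    have h1 := hν s hs (s⁻¹ * x * s) hnN
    have h1' : x * (ν s * (s⁻¹ * x * s) * (ν s)⁻¹)⁻¹ ∈ C s := by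
      have hx' : s * (s⁻¹ * x * s) * s⁻¹ = x := by group
      rwa [hx'] at h1
    have hmD : ν s * (s⁻¹ * x * s) * (ν s)⁻¹ ∈ D := by
      have heqm : ν s * (s⁻¹ * x * s) * (ν s)⁻¹ =
          (x * (ν s * (s⁻¹ * x * s) * (ν s)⁻¹)⁻¹)⁻¹ * x := by group
      rw [heqm]
      exact mul_mem (inv_mem (hCtD s hs h1')) hx
    have h2 := hDnormN ((ν s)⁻¹) (inv_mem (hνN s hs)) _ hmD
    have heq2 : (ν s)⁻¹ * (ν s * (s⁻¹ * x * s) * (ν s)⁻¹) * ((ν s)⁻¹)⁻¹ = s⁻¹ * x * s := by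
      group
    rwa [heq2] at h2
  -- S is contained in the normalizer of D
  have hSsub : ∀ s ∈ S, s ∈ (Subgroup.normalizer (D : Set L)) := by
    intro s hs
    rw [Subgroup.mem_normalizer_iff]
    intro x
    constructor
    · exact key1 s hs x
    · intro hx
      have := key2 s hs _ hx
      have heq3 : s⁻¹ * (s * x * s⁻¹) * s = x := by group
      rwa [heq3] at this
  have hcl : Subgroup.closure (S : Set L) ≤ (Subgroup.normalizer (D : Set L)) :=
    (Subgroup.closure_le _).2 hSsub
  -- the normalizer is closed
  have hDcl : IsClosed (D : Set L) := hDc.isClosed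
  have hclosed : IsClosed ((Subgroup.normalizer (D : Set L)) : Set L) := by
    have hset : ((Subgroup.normalizer (D : Set L)) : Set L) =
        (⋂ d ∈ (D : Set L), {g : L | g * d * g⁻¹ ∈ (D : Set L)}) ∩
        (⋂ d ∈ (D : Set L), {g : L | g⁻¹ * d * g ∈ (D : Set L)}) := by
      ext g
      simp only [Set.mem_inter_iff, Set.mem_iInter, SetLike.mem_coe, Set.mem_setOf_eq,
        Subgroup.mem_normalizer_iff]
      constructor
      · intro h
        refine ⟨fun d hd => (h d).1 hd, fun d hd => ?_⟩
        apply (h (g⁻¹ * d * g)).2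
        have : g * (g⁻¹ * d * g) * g⁻¹ = d := by group
        rwa [this]
      · rintro ⟨h1, h2⟩ h
        constructor
        · exact h1 h
        · intro hh
          have := h2 _ hh
          have heq4 : g⁻¹ * (g * h * g⁻¹) * g = h := by group
          rwa [heq4] at this
    rw [hset]
    apply IsClosed.inter
    · exact isClosed_biInter fun d _ =>
        hDcl.preimage ((continuous_id.mul continuous_const).mul continuous_inv)
    · exact isClosed_biInter fun d _ =>
        hDcl.preimage ((continuous_inv.mul continuous_const).mul continuous_id)
  -- by density, the normalizer is everything
  have htop : ∀ g : L, g ∈ (Subgroup.normalizer (D : Set L)) := by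
    intro g
    have hsub : (Subgroup.closure (S : Set L) : Set L) ⊆ ((Subgroup.normalizer (D : Set L)) : Set L) := hcl
    have hcls : closure ((Subgroup.closure (S : Set L) : Set L)) ⊆ ((Subgroup.normalizer (D : Set L)) : Set L) :=
      hclosed.closure_subset_iff.2 hsub
    have huniv : (Set.univ : Set L) ⊆ ((Subgroup.normalizer (D : Set L)) : Set L) := by
      rw [← hS.closure_eq]; exact hcls
    exact huniv (Set.mem_univ g)
  refine ⟨D, hKD, hDN, hDc, fun g => ?_⟩
  have hg := Subgroup.mem_normalizer_iff.1 (htop g)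
  ext x
  simp only [Subgroup.mem_map, MulEquiv.coe_toMonoidHom, MulAut.conj_apply]
  constructor
  · rintro ⟨y, hy, rfl⟩
    exact (hg y).1 hy
  · intro hx
    refine ⟨g⁻¹ * x * g, (hg (g⁻¹ * x * g)).2 ?_, by group⟩
    have : g * (g⁻¹ * x * g) * g⁻¹ = x := by group
    rwa [this]
end

section
/- Let $G$ be a group and let $\Gamma' \leq M \leq \Gamma$ be subgroups of $G$ with $\Gamma'$ of finite index in $\Gamma$. Let $\Lambda \leq G$ be a subgroup that normalizes both $\Gamma$ and $\Gamma'$ (i.e. $\lambda \Gamma \lambda^{-1} = \Gamma$ and $\lambda \Gamma' \lambda^{-1} = \Gamma'$ for all $\lambda \in \Lambda$). Then $\{\lambda \in \Lambda : \lambda M \lambda^{-1} = M\}$ is a subgroup of finite index in $\Lambda$. -/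
private lemma conj_map_eq_iff_mem_normalizer {G : Type*} [Group G] (M : Subgroup G) (x : G) :
    M.map (MulAut.conj x).toMonoidHom = M ↔ x ∈ Subgroup.normalizer (M : Set G) := by
  rw [Subgroup.mem_normalizer_iff]
  constructor
  · intro h n
    constructor
    · intro hn
      rw [← h]
      exact ⟨n, hn, rfl⟩
    · intro hn
      rw [← h] at hn
      obtain ⟨m, hm, hme⟩ := hn
      simp only [MulEquiv.coe_toMonoidHom, MulAut.conj_apply] at hme
      have hmn : m = n := mul_left_cancel (mul_right_cancel hme)
      rwa [← hmn]
  · intro h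
    ext y
    simp only [Subgroup.mem_map, MulEquiv.coe_toMonoidHom, MulAut.conj_apply]
    constructor
    · rintro ⟨m, hm, rfl⟩
      exact ((h m).mp hm)
    · intro hy
      refine ⟨x⁻¹ * y * x, ?_, by group⟩
      have := (h (x⁻¹ * y * x)).mpr
      apply this
      convert hy using 1
      group

private lemma conj_map_mul {G : Type*} [Group G] (M : Subgroup G) (a b : G) :
    M.map (MulAut.conj (a * b)).toMonoidHom =
      (M.map (MulAut.conj b).toMonoidHom).map (MulAut.conj a).toMonoidHom := by
  rw [Subgroup.map_map]
  congr 1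
  ext x
  simp [mul_assoc]

/-- Let `Γ' ≤ M ≤ Γ` be subgroups of `G` with `Γ'` of finite index in `Γ`,
and let `Λ ≤ G` be a subgroup normalizing both `Γ` and `Γ'`. Then `{λ ∈ Λ : λMλ⁻¹ = M}` is a
subgroup of finite index in `Λ`. -/
theorem stmt11 {G : Type*} [Group G] (Γ Γ' M Λ : Subgroup G)
    (hΓ'M : Γ' ≤ M) (hMΓ : M ≤ Γ) (hΓ'fin : Γ'.relIndex Γ ≠ 0)
    (hnormΓ : ∀ l ∈ Λ, Γ.map (MulAut.conj l).toMonoidHom = Γ)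
    (hnormΓ' : ∀ l ∈ Λ, Γ'.map (MulAut.conj l).toMonoidHom = Γ') :
    ∃ S : Subgroup G,
      (S : Set G) = {x : G | x ∈ Λ ∧ M.map (MulAut.conj x).toMonoidHom = M} ∧
      S.relIndex Λ ≠ 0 := by
  classical
  refine ⟨Λ ⊓ Subgroup.normalizer (M : Set G), ?_, ?_⟩
  · ext x
    simp only [Subgroup.coe_inf, Set.mem_inter_iff, SetLike.mem_coe, Set.mem_setOf_eq,
      conj_map_eq_iff_mem_normalizer]
  -- finite index part
  · -- the quotient `G ⧸ Γ'` and the image `T` of `Γ` in it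
    set T : Set (G ⧸ (Γ' : Subgroup G)) := QuotientGroup.mk '' (Γ : Set G) with hT
    -- T is finite
    have hrelfin : Finite (Γ ⧸ Γ'.subgroupOf Γ) := by
      have : Nat.card (Γ ⧸ Γ'.subgroupOf Γ) ≠ 0 := hΓ'fin
      exact (Nat.card_ne_zero.mp this).2
    have hTfin : T.Finite := by
      have : T ⊆ Set.range (fun q : Γ ⧸ Γ'.subgroupOf Γ =>
          Quotient.liftOn' q (fun γ => (QuotientGroup.mk (γ : G) : G ⧸ Γ'))
            (by
              intro a b hab
              rw [QuotientGroup.leftRel_apply] at hab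
              exact (QuotientGroup.eq).mpr hab)) := by
        rintro x ⟨γ, hγ, rfl⟩
        exact ⟨QuotientGroup.mk (⟨γ, hγ⟩ : Γ), rfl⟩
      exact Set.Finite.subset (Set.finite_range _) this
    -- the coset picture of a conjugate of M
    set cset : ↥Λ → Set (G ⧸ (Γ' : Subgroup G)) :=
      fun l => QuotientGroup.mk '' ((M.map (MulAut.conj (l : G)).toMonoidHom : Subgroup G) : Set G)
      with hcset
    have hsub : ∀ l : ↥Λ, cset l ⊆ T := by
      intro l x hx
      obtain ⟨g, hg, rfl⟩ := hx
      have : g ∈ Γ.map (MulAut.conj (l : G)).toMonoidHom :=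
        Subgroup.map_mono hMΓ hg
      rw [hnormΓ _ l.2] at this
      exact ⟨g, this, rfl⟩
    -- recover a subgroup containing Γ' from its coset image
    have hrec : ∀ (H : Subgroup G), Γ' ≤ H → ∀ g : G,
        g ∈ H ↔ (QuotientGroup.mk g : G ⧸ (Γ' : Subgroup G)) ∈
          (QuotientGroup.mk '' (H : Set G) : Set (G ⧸ (Γ' : Subgroup G))) := by
      intro H hH g
      constructor
      · intro hg; exact ⟨g, hg, rfl⟩
      · rintro ⟨h, hh, he⟩
        have : h⁻¹ * g ∈ Γ' := (QuotientGroup.eq).mp he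
        have : h * (h⁻¹ * g) ∈ H := H.mul_mem hh (hH this)
        simpa using this
    have hΓ'le : ∀ l : ↥Λ, Γ' ≤ M.map (MulAut.conj (l : G)).toMonoidHom := by
      intro l
      conv_lhs => rw [← hnormΓ' _ l.2]
      exact Subgroup.map_mono hΓ'M
    -- key: cset equality characterises the coset in Λ ⧸ (Λ ⊓ N(M))
    set K : Subgroup ↥Λ := (Λ ⊓ Subgroup.normalizer (M : Set G)).subgroupOf Λ with hK
    have hkey : ∀ l₁ l₂ : ↥Λ, cset l₁ = cset l₂ ↔ l₁⁻¹ * l₂ ∈ K := by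
      intro l₁ l₂
      have hmaps : cset l₁ = cset l₂ ↔
          M.map (MulAut.conj (l₁ : G)).toMonoidHom = M.map (MulAut.conj (l₂ : G)).toMonoidHom := by
        constructor
        · intro h
          have h' : cset l₁ = cset l₂ := h
          ext g
          rw [hrec _ (hΓ'le l₁) g, hrec _ (hΓ'le l₂) g]
          constructor
          · intro hg
            have h1 : (QuotientGroup.mk g : G ⧸ (Γ' : Subgroup G)) ∈ cset l₁ := hg
            rw [h'] at h1
            exact h1
          · intro hg
            have h1 : (QuotientGroup.mk g : G ⧸ (Γ' : Subgroup G)) ∈ cset l₂ := hg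
            rw [← h'] at h1
            exact h1
        · intro h
          show QuotientGroup.mk '' ((M.map (MulAut.conj ((l₁ : Λ) : G)).toMonoidHom : Subgroup G) : Set G)
            = QuotientGroup.mk '' ((M.map (MulAut.conj ((l₂ : Λ) : G)).toMonoidHom : Subgroup G) : Set G)
          rw [h]
      rw [hmaps]
      have hmem : l₁⁻¹ * l₂ ∈ K ↔ ((l₁ : G)⁻¹ * (l₂ : G) ∈ Λ ∧
          (l₁ : G)⁻¹ * (l₂ : G) ∈ Subgroup.normalizer (M : Set G)) := by
        rw [hK, Subgroup.mem_subgroupOf]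
        simp [Subgroup.mem_inf]
      rw [hmem]
      have hΛmem : (l₁ : G)⁻¹ * (l₂ : G) ∈ Λ := Λ.mul_mem (Λ.inv_mem l₁.2) l₂.2
      constructor
      · intro h
        refine ⟨hΛmem, ?_⟩
        rw [← conj_map_eq_iff_mem_normalizer]
        have h1 : M.map (MulAut.conj ((l₁ : G) * ((l₁ : G)⁻¹ * (l₂ : G)))).toMonoidHom =
            M.map (MulAut.conj (l₁ : G)).toMonoidHom := by
          rw [mul_inv_cancel_left]
          exact h.symm
        rw [conj_map_mul] at h1
        refine Subgroup.map_injective ?_ h1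
        intro a b hab
        exact (MulAut.conj (l₁ : G)).injective hab
      · rintro ⟨-, h⟩
        rw [← conj_map_eq_iff_mem_normalizer] at h
        have h1 := congrArg (Subgroup.map (MulAut.conj (l₁ : G)).toMonoidHom) h
        rw [← conj_map_mul, mul_inv_cancel_left] at h1
        exact h1.symm
    -- build the injection from the quotient into subsets of T
    have : Finite (↥Λ ⧸ K) := by
      have hTsub : Finite ↥{t : Set (G ⧸ (Γ' : Subgroup G)) | t ⊆ T} :=
        (Set.Finite.finite_subsets hTfin).to_subtype
      refine Finite.of_injective
        (fun q : ↥Λ ⧸ K => (Quotient.liftOn' q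
          (fun l => (⟨cset l, hsub l⟩ : {t : Set (G ⧸ (Γ' : Subgroup G)) | t ⊆ T}))
          (by
            intro a b hab
            rw [QuotientGroup.leftRel_apply] at hab
            exact Subtype.ext ((hkey a b).mpr hab)))) ?_
      intro q₁ q₂ h
      induction q₁ using Quotient.inductionOn' with
      | h l₁ =>
      induction q₂ using Quotient.inductionOn' with
      | h l₂ =>
      simp only [Quotient.liftOn'_mk''] at h
      have := (hkey l₁ l₂).mp (congrArg Subtype.val h)
      exact Quotient.sound' ((QuotientGroup.leftRel_apply).mpr this)
    have : (K : Subgroup ↥Λ).index ≠ 0 := Subgroup.index_ne_zero_of_finite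
    exact this
end

section
/- Let $L$ be a topological group, $N$ a normal subgroup of $L$, and $K \leq L$ a subgroup with $N \cap K = \{e\}$ such that the set $U = NK$ is an open subgroup of $L$ and the multiplication map $N \times K \to U$, $(n,k) \mapsto nk$, is a homeomorphism (where $N$, $K$, $U$ carry the subspace topologies and $N \times K$ the product topology). Then $L$ is homeomorphic, as a topological space, to the product $N \times (L/N)$, where $L/N$ carries the quotient topology. -/
open scoped Pointwise

/-- Let `L` be a topological group, `N ⊴ L`, and `K ≤ L` with `N ⊓ K = ⊥`
such that `U = NK` is an open subgroup of `L` and multiplication `N × K → U` is a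
homeomorphism. Then `L` is homeomorphic to `N × (L/N)`, where `L/N` carries the quotient
topology. -/
theorem stmt13 {L : Type*} [Group L] [TopologicalSpace L] [IsTopologicalGroup L]
    (N K U : Subgroup L) [N.Normal]
    (hNK : N ⊓ K = ⊥)
    (hU : (U : Set L) = (N : Set L) * (K : Set L))
    (hUopen : IsOpen (U : Set L))
    (hmul : ∃ h : (N × K) ≃ₜ U, ∀ p : N × K, ((h p : L) = (p.1 : L) * (p.2 : L))) :
    Nonempty (L ≃ₜ N × (L ⧸ N)) := by
  classical
  obtain ⟨h, hh⟩ := hmul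
  have hN : N.Normal := inferInstance
  -- a purely group-theoretic computation used below
  have alg : ∀ c a b x : L, c⁻¹ * x = a * b → x * (c * b)⁻¹ = c * a * c⁻¹ := by
    intro c a b x hcx
    have hx : x = c * (a * b) := by rw [← hcx]; group
    rw [hx]; group
  -- N ≤ U
  have hNU : N ≤ U := by
    intro n hn
    have : (n : L) ∈ (U : Set L) := by
      rw [hU]
      exact ⟨n, hn, 1, K.one_mem, mul_one n⟩
    exact this
  -- the K-component of an element of U
  set kc : U → L := fun u => ((h.symm u).2 : L) with hkcdef
  have hkc_cont : Continuous kc :=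
    continuous_subtype_val.comp (continuous_snd.comp h.symm.continuous)
  -- decomposition : u = nc u * kc u
  have hdec : ∀ u : U, (u : L) = ((h.symm u).1 : L) * kc u := by
    intro u
    have := hh (h.symm u)
    rwa [h.apply_symm_apply] at this
  -- uniqueness of the K-component
  have hkc_unique : ∀ (n : N) (k : K) (w : L) (hw : w ∈ U),
      w = (n : L) * (k : L) → kc ⟨w, hw⟩ = (k : L) := by
    intro n k w hw hwnk
    have h1 : h (n, k) = (⟨w, hw⟩ : U) := by
      apply Subtype.ext
      rw [hh (n, k)]
      exact hwnk.symm
    have h2 : h.symm ⟨w, hw⟩ = (n, k) := by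
      rw [← h1, h.symm_apply_apply]
    simp [hkcdef, h2]
  -- the transversal function for U-cosets
  set t : L → L := fun x => ((QuotientGroup.mk x : L ⧸ U)).out with htdef
  have ht : ∀ x : L, (t x)⁻¹ * x ∈ U := by
    intro x
    have : (QuotientGroup.mk (t x) : L ⧸ U) = QuotientGroup.mk x :=
      QuotientGroup.out_eq' _
    exact (QuotientGroup.eq).1 this
  have htC : ∀ x y : L, x⁻¹ * y ∈ U → t x = t y := by
    intro x y hxy
    have : (QuotientGroup.mk x : L ⧸ U) = QuotientGroup.mk y := (QuotientGroup.eq).2 hxy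
    simp [htdef, this]
  -- the section composed with the projection
  set s₀ : L → L := fun x => t x * kc ⟨(t x)⁻¹ * x, ht x⟩ with hs₀def
  -- x * (s₀ x)⁻¹ ∈ N
  have hs₀N : ∀ x : L, x * (s₀ x)⁻¹ ∈ N := by
    intro x
    have key : (t x)⁻¹ * x
        = ((h.symm ⟨(t x)⁻¹ * x, ht x⟩).1 : L) * kc ⟨(t x)⁻¹ * x, ht x⟩ :=
      hdec ⟨(t x)⁻¹ * x, ht x⟩
    have hcalc := alg (t x) ((h.symm ⟨(t x)⁻¹ * x, ht x⟩).1 : L)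
      (kc ⟨(t x)⁻¹ * x, ht x⟩) x key
    show x * (t x * kc ⟨(t x)⁻¹ * x, ht x⟩)⁻¹ ∈ N
    rw [hcalc]
    exact hN.conj_mem _ (h.symm ⟨(t x)⁻¹ * x, ht x⟩).1.2 _
  -- s₀ is constant on left N-cosets
  have hs₀C : ∀ x y : L, x⁻¹ * y ∈ N → s₀ x = s₀ y := by
    intro x y hm'
    have htxy : t x = t y := htC x y (hNU hm')
    set m : L := x⁻¹ * y with hmdef
    have hy : y = x * m := by rw [hmdef]; group
    set n : N := (h.symm ⟨(t x)⁻¹ * x, ht x⟩).1 with hn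
    set k : K := (h.symm ⟨(t x)⁻¹ * x, ht x⟩).2 with hk
    have hxdec : (t x)⁻¹ * x = (n : L) * (k : L) := hdec ⟨(t x)⁻¹ * x, ht x⟩
    have hmm : (k : L) * m * (k : L)⁻¹ ∈ N := hN.conj_mem m hm' _
    have hydec : (t y)⁻¹ * y
        = ((⟨(n : L) * ((k : L) * m * (k : L)⁻¹), N.mul_mem n.2 hmm⟩ : N) : L) * (k : L) := by
      show (t y)⁻¹ * y = ((n : L) * ((k : L) * m * (k : L)⁻¹)) * (k : L)
      rw [← htxy, hy]
      calc (t x)⁻¹ * (x * m) = ((t x)⁻¹ * x) * m := by group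
        _ = ((n : L) * (k : L)) * m := by rw [hxdec]
        _ = ((n : L) * ((k : L) * m * (k : L)⁻¹)) * (k : L) := by group
    have e1 : kc ⟨(t x)⁻¹ * x, ht x⟩ = (k : L) := hkc_unique n k _ (ht x) hxdec
    have e2 : kc ⟨(t y)⁻¹ * y, ht y⟩ = (k : L) :=
      hkc_unique ⟨(n : L) * ((k : L) * m * (k : L)⁻¹), N.mul_mem n.2 hmm⟩ k _ (ht y) hydec
    show t x * kc ⟨(t x)⁻¹ * x, ht x⟩ = t y * kc ⟨(t y)⁻¹ * y, ht y⟩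
    rw [e1, e2, htxy]
  -- continuity of s₀
  have hs₀cont : Continuous s₀ := by
    rw [continuous_iff_continuousAt]
    intro x₀
    set V : Set L := (fun x => (t x₀)⁻¹ * x) ⁻¹' (U : Set L) with hV
    have hVopen : IsOpen V := hUopen.preimage (continuous_mul_left _)
    have hx₀V : x₀ ∈ V := ht x₀
    have htV : ∀ x ∈ V, t x = t x₀ := by
      intro x hx
      apply (htC x₀ x _).symm
      have h1 : x₀⁻¹ * t x₀ ∈ U := by
        have := U.inv_mem (ht x₀)
        rwa [mul_inv_rev, inv_inv] at this
      have h2 : (t x₀)⁻¹ * x ∈ U := hx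
      have h3 : x₀⁻¹ * x = (x₀⁻¹ * t x₀) * ((t x₀)⁻¹ * x) := by group
      rw [h3]
      exact U.mul_mem h1 h2
    have hCO : ContinuousOn s₀ V := by
      rw [continuousOn_iff_continuous_restrict]
      have hrestr : V.domRestrict s₀
          = fun x : V => t x₀ * kc ⟨(t x₀)⁻¹ * (x : L), x.2⟩ := by
        funext x
        show t (x : L) * kc ⟨(t (x : L))⁻¹ * (x : L), ht (x : L)⟩
          = t x₀ * kc ⟨(t x₀)⁻¹ * (x : L), x.2⟩
        have harg : (⟨(t (x : L))⁻¹ * (x : L), ht (x : L)⟩ : U)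
            = ⟨(t x₀)⁻¹ * (x : L), x.2⟩ := by
          apply Subtype.ext
          show (t (x : L))⁻¹ * (x : L) = (t x₀)⁻¹ * (x : L)
          rw [htV (x : L) x.2]
        rw [harg, htV (x : L) x.2]
      rw [hrestr]
      apply continuous_const.mul
      exact hkc_cont.comp
        (Continuous.subtype_mk ((continuous_mul_left _).comp continuous_subtype_val) _)
    exact hCO.continuousAt (hVopen.mem_nhds hx₀V)
  -- the section on the quotient
  set s : L ⧸ N → L := fun q => s₀ q.out with hsdef
  have hsmk : ∀ x : L, s (QuotientGroup.mk x) = s₀ x := by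
    intro x
    have hmem : x⁻¹ * ((QuotientGroup.mk x : L ⧸ N)).out ∈ N :=
      (QuotientGroup.eq).1 (QuotientGroup.out_eq' (QuotientGroup.mk x : L ⧸ N)).symm
    exact (hs₀C x _ hmem).symm
  have hscont : Continuous s := by
    rw [(QuotientGroup.isQuotientMap_mk N).continuous_iff]
    have : (s ∘ QuotientGroup.mk) = s₀ := funext hsmk
    rw [this]
    exact hs₀cont
  -- build the homeomorphism
  refine ⟨Homeomorph.mk (Equiv.mk
    (fun x => (⟨x * (s₀ x)⁻¹, hs₀N x⟩, QuotientGroup.mk x))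
    (fun p => (p.1 : L) * s p.2) ?_ ?_) ?_ ?_⟩
  · -- left inverse
    intro x
    show (x * (s₀ x)⁻¹) * s (QuotientGroup.mk x) = x
    rw [hsmk x]
    group
  · -- right inverse
    rintro ⟨n, q⟩
    have hyq : (QuotientGroup.mk q.out : L ⧸ N) = q := QuotientGroup.out_eq' q
    have hsq : s q = s₀ q.out := rfl
    have hzy : q.out⁻¹ * ((n : L) * s q) ∈ N := by
      have h1 : q.out * (s₀ q.out)⁻¹ ∈ N := hs₀N q.out
      have h2 : q.out⁻¹ * ((n : L) * s q)
          = q.out⁻¹ * ((n : L) * (q.out * (s₀ q.out)⁻¹)⁻¹) * (q.out⁻¹)⁻¹ := by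
        rw [hsq]; group
      rw [h2]
      exact hN.conj_mem _ (N.mul_mem n.2 (N.inv_mem h1)) _
    have hs₀z : s₀ ((n : L) * s q) = s₀ q.out := (hs₀C q.out _ hzy).symm
    have hmkz : (QuotientGroup.mk ((n : L) * s q) : L ⧸ N) = q := by
      have step : (QuotientGroup.mk ((n : L) * s q) : L ⧸ N) = QuotientGroup.mk q.out := by
        apply (QuotientGroup.eq).2
        have h3 : ((n : L) * s q)⁻¹ * q.out = (q.out⁻¹ * ((n : L) * s q))⁻¹ := by group
        rw [h3]
        exact N.inv_mem hzy
      exact step.trans hyq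
    refine Prod.ext ?_ ?_
    · apply Subtype.ext
      show ((n : L) * s q) * (s₀ ((n : L) * s q))⁻¹ = (n : L)
      rw [hs₀z, hsq]
      group
    · exact hmkz
  · -- continuity of toFun
    apply Continuous.prodMk
    · exact Continuous.subtype_mk (continuous_id.mul hs₀cont.inv) _
    · exact QuotientGroup.continuous_mk
  · -- continuity of invFun
    exact (continuous_subtype_val.comp continuous_fst).mul (hscont.comp continuous_snd)
end
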